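/- Let M be a type carrying the discrete topology, Γ a set of finite subsets of M, k : ℕ, and f : Fin k → (ℕ → Bool) → M a family of continuous functions. Write f₀ i := fun w => f i (cons false w) and f₁ i := fun w => f i (cons true w). Then the flag strict hypercoherence of f holds iff either the flag strict hypercoherence of f₀ holds, or (f₀ i = f₀ j for all i, j, and the flag strict hypercoherence of f₁ holds). (Contraction isomorphism for the flag modality on hypercoherences: flag X ≅ flag X ◁ flag X.) -/
import Mathlib


/-- Lexicographic (strict) order on the Cantor space `ℕ → Bool`. -/
def lexLt (w w' : ℕ → Bool) : Prop :=
  ∃ n : ℕ, (∀ k < n, w k = w' k) ∧ w n = false ∧ w' n = true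

/-- Prepending a boolean to an infinite word. -/
def cons (b : Bool) (w : ℕ → Bool) : ℕ → Bool
  | 0 => b
  | n + 1 => w n

/-- Flag strict hypercoherence of a finite family of functions on the Cantor space. -/
def flagHyp {M : Type*} [DecidableEq M] (Γ : Set (Finset M)) {k : ℕ}
    (f : Fin k → (ℕ → Bool) → M) : Prop :=
  ∃ w, (Finset.univ.image (fun i => f i w) ∈ Γ ∧
          1 < (Finset.univ.image (fun i => f i w)).card) ∧
    ∀ v, lexLt v w → ∃ a, Finset.univ.image (fun i => f i v) = {a}

/-- tail of an infinite word -/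
def tl (w : ℕ → Bool) : ℕ → Bool := fun n => w (n + 1)

lemma cons_tl (w : ℕ → Bool) : cons (w 0) (tl w) = w := by
  funext n; cases n <;> rfl

lemma lexLt_cons_cons {b : Bool} {v w : ℕ → Bool} :
    lexLt (cons b v) (cons b w) ↔ lexLt v w := by
  constructor
  · rintro ⟨n, h, hv, hw⟩
    cases n with
    | zero =>
      simp only [cons] at hv hw
      rw [hv] at hw; exact absurd hw (by simp)
    | succ m => exact ⟨m, fun k hk => h (k + 1) (by omega), hv, hw⟩
  · rintro ⟨n, h, hv, hw⟩
    refine ⟨n + 1, fun k hk => ?_, hv, hw⟩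
    cases k with
    | zero => rfl
    | succ j => exact h j (by omega)

lemma lexLt_false_true {v w : ℕ → Bool} : lexLt (cons false v) (cons true w) :=
  ⟨0, fun k hk => absurd hk (by omega), rfl, rfl⟩

lemma lexLt_cons_false {v w : ℕ → Bool} (h : lexLt v (cons false w)) :
    v 0 = false ∧ lexLt (tl v) w := by
  obtain ⟨n, h, hv, hw⟩ := h
  cases n with
  | zero => exact absurd hw (by simp [cons])
  | succ m =>
    refine ⟨h 0 (by omega), ⟨m, fun k hk => h (k + 1) (by omega), hv, hw⟩⟩

lemma lexLt_cons_true {v w : ℕ → Bool} (h : lexLt v (cons true w)) :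
    v 0 = false ∨ (v 0 = true ∧ lexLt (tl v) w) := by
  obtain ⟨n, h, hv, hw⟩ := h
  cases n with
  | zero => exact Or.inl hv
  | succ m =>
    exact Or.inr ⟨h 0 (by omega), ⟨m, fun k hk => h (k + 1) (by omega), hv, hw⟩⟩

/-- Contraction isomorphism for the flag modality on hypercoherences:
`flag X ≅ flag X ◁ flag X`. -/
theorem flag_hypercoherence_contraction {M : Type*} [TopologicalSpace M]
    [DiscreteTopology M] [DecidableEq M]
    (Γ : Set (Finset M)) (k : ℕ) (f : Fin k → (ℕ → Bool) → M)
    (hf : ∀ i, Continuous (f i)) :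
    flagHyp Γ f ↔
      (flagHyp Γ (fun i => fun w => f i (cons false w)) ∨
        ((∀ i j, (fun w => f i (cons false w)) = (fun w => f j (cons false w))) ∧
          flagHyp Γ (fun i => fun w => f i (cons true w)))) := by
  constructor
  · rintro ⟨w, ⟨hΓ, hc⟩, hmin⟩
    rcases Bool.eq_false_or_eq_true (w 0) with h0 | h0
    swap
    · left
      have hw : cons false (tl w) = w := by rw [← h0]; exact cons_tl w
      refine ⟨tl w, ⟨by simp only [hw]; exact hΓ, by simp only [hw]; exact hc⟩, ?_⟩
      intro v hv
      exact hmin (cons false v) (hw ▸ lexLt_cons_cons.mpr hv)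
    · right
      have hw : cons true (tl w) = w := by rw [← h0]; exact cons_tl w
      constructor
      · intro i j
        funext v
        obtain ⟨a, ha⟩ := hmin (cons false v) (hw ▸ lexLt_false_true)
        have hi : f i (cons false v) ∈ ({a} : Finset M) := by
          rw [← ha]; exact Finset.mem_image_of_mem _ (Finset.mem_univ i)
        have hj : f j (cons false v) ∈ ({a} : Finset M) := by
          rw [← ha]; exact Finset.mem_image_of_mem _ (Finset.mem_univ j)
        simp only [Finset.mem_singleton] at hi hj
        rw [hi, hj]
      · refine ⟨tl w, ⟨by simp only [hw]; exact hΓ, by simp only [hw]; exact hc⟩, ?_⟩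
        intro v hv
        exact hmin (cons true v) (hw ▸ lexLt_cons_cons.mpr hv)
  · rintro (⟨w, ⟨hΓ, hc⟩, hmin⟩ | ⟨heq, w, ⟨hΓ, hc⟩, hmin⟩)
    · refine ⟨cons false w, ⟨hΓ, hc⟩, ?_⟩
      intro v hv
      obtain ⟨h0, hlt⟩ := lexLt_cons_false hv
      have hv' : cons false (tl v) = v := by rw [← h0]; exact cons_tl v
      obtain ⟨a, ha⟩ := hmin (tl v) hlt
      exact ⟨a, by simp only [hv'] at ha; exact ha⟩
    · have hne : (Finset.univ : Finset (Fin k)).Nonempty := by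
        rcases Finset.image_nonempty.mp (Finset.card_pos.mp (Nat.zero_lt_of_lt hc)) with ⟨i, hi⟩
        exact ⟨i, hi⟩
      obtain ⟨i0, -⟩ := id hne
      refine ⟨cons true w, ⟨hΓ, hc⟩, ?_⟩
      intro v hv
      rcases lexLt_cons_true hv with h0 | ⟨h0, hlt⟩
      · have hv' : cons false (tl v) = v := by rw [← h0]; exact cons_tl v
        refine ⟨f i0 v, ?_⟩
        have hall : ∀ i, f i v = f i0 v := by
          intro i
          have := congrFun (heq i i0) (tl v)
          simpa [hv'] using this
        calc Finset.univ.image (fun i => f i v)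
            = Finset.univ.image (fun _ => f i0 v) :=
              Finset.image_congr (fun i _ => hall i)
          _ = {f i0 v} := Finset.image_const hne _
      · have hv' : cons true (tl v) = v := by rw [← h0]; exact cons_tl v
        obtain ⟨a, ha⟩ := hmin (tl v) hlt
        exact ⟨a, by simp only [hv'] at ha; exact ha⟩
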